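/- Let p ≥ 3 be prime, 0 < x < p an integer, and define S_k(x, p^r) = Σ 1/i^k over integers 0 < i < p^r with i ≡ x (mod p). Then S_k(x, p²) ≡ p·S_k(x, p) (mod p²), and for every r ≥ 2 and k ≥ 1, S_k(x, p^{r+1}) ≡ p·S_k(x, p^r) (mod p^{r+2}). -/

import Mathlib

/-- `S p k x R = ∑_{0 < i < R, i ≡ x (mod p)} 1/i^k`. -/
def S (p k x R : ℕ) : ℚ :=
  ∑ i ∈ (Finset.Ioo 0 R).filter (fun i => i % p = x % p), (1 : ℚ) / (i : ℚ)^k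

/-!
Write the integers `0 < i < p ^ (r + 1)` with `i ≡ x (mod p)` as `y + t p ^ r` with `0 < y < p ^ r`,
`y ≡ x (mod p)` and `0 ≤ t < p`. Expanding `1 / (y + t p ^ r) ^ k` to first order modulo `p ^ (2 r)`
and summing over `t` gives
`S_k(x, p ^ (r + 1)) - p S_k(x, p ^ r) ≡ -k p ^ r (p (p - 1) / 2) S_{k+1}(x, p ^ r)`,
where `p ∣ p (p - 1) / 2` because `p` is odd. Finally `S_{k+1}(x, p ^ r)` is `p`-integral, and
for `r ≥ 2` it is `≡ p ^ (r - 1) / x ^ (k + 1) ≡ 0 (mod p)`.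
Congruences are expressed through `padicNorm`.
-/

open Finset

theorem sum_range_mul_eq_sum_sum {M : Type*} [AddCommMonoid M] (f : ℕ → M) (m n : ℕ) :
    ∑ j ∈ range (m * n), f j = ∑ t ∈ range n, ∑ j ∈ range m, f (j + t * m) := by
  induction n with
  | zero => simp
  | succ n ih =>
    rw [Nat.mul_succ, sum_range_add, ih, sum_range_succ]
    simp only [Nat.add_comm, Nat.mul_comm]

theorem filter_Ioo_mul_mod_eq_image {p x : ℕ} (hx : 0 < x) (hxp : x < p) (m : ℕ) :
    (Ioo 0 (p * m)).filter (fun i => i % p = x % p) = (range m).image (fun j => x + j * p) := by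
  rw [Nat.mod_eq_of_lt hxp]
  ext i
  simp only [mem_filter, mem_Ioo, mem_image, mem_range]
  constructor
  · rintro ⟨⟨-, him⟩, hmod⟩
    refine ⟨i / p, Nat.div_lt_of_lt_mul him, ?_⟩
    have := Nat.div_add_mod i p
    rw [hmod] at this
    linarith
  · rintro ⟨j, hj, rfl⟩
    refine ⟨⟨by omega, ?_⟩, by simp [Nat.mod_eq_of_lt hxp]⟩
    nlinarith

theorem S_mul_eq_sum {p x : ℕ} (hx : 0 < x) (hxp : x < p) (k m : ℕ) :
    S p k x (p * m) = ∑ j ∈ range m, 1 / ((x : ℚ) + j * p) ^ k := by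
  rw [S, filter_Ioo_mul_mod_eq_image hx hxp, sum_image]
  · simp
  · intro a _ b _ h
    simpa [show p ≠ 0 by omega] using h

theorem prime_dvd_sum_range_id {p : ℕ} (hp : p.Prime) (hp2 : p ≠ 2) : p ∣ ∑ t ∈ range p, t := by
  obtain ⟨c, hc⟩ := hp.even_sub_one hp2
  exact ⟨c, Nat.eq_of_mul_eq_mul_right two_pos (by rw [sum_range_id_mul_two, hc]; ring)⟩

section padicNorm

variable {p : ℕ} [Fact p.Prime]

theorem padicNorm_intCast_le_of_dvd {a n : ℤ} (h : a ∣ n) : padicNorm p n ≤ padicNorm p a := by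
  obtain ⟨c, rfl⟩ := h
  rw [Int.cast_mul, padicNorm.mul]
  exact mul_le_of_le_one_right (padicNorm.nonneg _) (padicNorm.of_int c)

theorem padicNorm_natCast_le_inv_of_dvd {n : ℕ} (h : p ∣ n) : padicNorm p n ≤ (p : ℚ)⁻¹ := by
  rw [← padicNorm.padicNorm_p_of_prime]
  exact_mod_cast padicNorm_intCast_le_of_dvd (p := p) (Int.natCast_dvd_natCast.mpr h)

theorem padicNorm_div_intCast_of_not_dvd (q : ℚ) {d : ℤ} (hd : ¬(p : ℤ) ∣ d) :
    padicNorm p (q / d) = padicNorm p q := by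
  rw [padicNorm.div, (padicNorm.int_eq_one_iff d).mpr hd, div_one]

theorem pow_dvd_num_of_padicNorm_le {q : ℚ} {s : ℕ} (h : padicNorm p q ≤ (p : ℚ)⁻¹ ^ s) :
    (p : ℤ) ^ s ∣ q.num := by
  have hnum : padicNorm p q.num ≤ padicNorm p q := by
    rw [← Rat.mul_den_eq_num, padicNorm.mul]
    exact mul_le_of_le_one_right (padicNorm.nonneg _) (padicNorm.of_nat _)
  have := (padicNorm.dvd_iff_norm_le (p := p) (n := s) (z := q.num)).mpr
    (by rw [zpow_neg, zpow_natCast, ← inv_pow]; exact hnum.trans h)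
  exact_mod_cast this

theorem padicNorm_intCast_div_le {n d a : ℤ} (hd : ¬(p : ℤ) ∣ d) (ha : a ∣ n) :
    padicNorm p ((n : ℚ) / d) ≤ padicNorm p a := by
  rw [padicNorm_div_intCast_of_not_dvd _ hd]
  exact padicNorm_intCast_le_of_dvd ha

variable {Y U : ℤ}

theorem padicNorm_inv_pow_add_sub_le (hY : ¬(p : ℤ) ∣ Y) (hU : (p : ℤ) ∣ U) (k : ℕ) :
    padicNorm p (1 / ((Y : ℚ) + U) ^ k - 1 / (Y : ℚ) ^ k) ≤ padicNorm p U := by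
  have hYU : ¬(p : ℤ) ∣ Y + U := (dvd_add_left hU).not.mpr hY
  have hp := Nat.prime_iff_prime_int.mp (Fact.out : p.Prime)
  have hY0 : (Y : ℚ) ≠ 0 := by exact_mod_cast fun h : Y = 0 => hY (h ▸ dvd_zero _)
  have hYU0 : (Y : ℚ) + U ≠ 0 := by exact_mod_cast fun h : Y + U = 0 => hYU (h ▸ dvd_zero _)
  have key : 1 / ((Y : ℚ) + U) ^ k - 1 / (Y : ℚ) ^ k
      = ((Y ^ k - (Y + U) ^ k : ℤ) : ℚ) / (((Y + U) ^ k * Y ^ k : ℤ) : ℚ) := by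
    push_cast
    field_simp
  rw [key]
  refine padicNorm_intCast_div_le
    (hp.not_dvd_mul (mt hp.dvd_of_dvd_pow hYU) (mt hp.dvd_of_dvd_pow hY)) ?_
  simpa using sub_dvd_pow_sub_pow Y (Y + U) k

theorem padicNorm_inv_pow_add_sub_taylor_le (hY : ¬(p : ℤ) ∣ Y) (hU : (p : ℤ) ∣ U) (k : ℕ) :
    padicNorm p (1 / ((Y : ℚ) + U) ^ k - 1 / (Y : ℚ) ^ k + k * U / (Y : ℚ) ^ (k + 1))
      ≤ padicNorm p U ^ 2 := by
  have hYU : ¬(p : ℤ) ∣ Y + U := (dvd_add_left hU).not.mpr hY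
  have hp := Nat.prime_iff_prime_int.mp (Fact.out : p.Prime)
  have hY0 : (Y : ℚ) ≠ 0 := by exact_mod_cast fun h : Y = 0 => hY (h ▸ dvd_zero _)
  have hYU0 : (Y : ℚ) + U ≠ 0 := by exact_mod_cast fun h : Y + U = 0 => hYU (h ▸ dvd_zero _)
  have key : 1 / ((Y : ℚ) + U) ^ k - 1 / (Y : ℚ) ^ k + k * U / (Y : ℚ) ^ (k + 1)
      = ((Y ^ (k + 1) - Y * (Y + U) ^ k + k * U * (Y + U) ^ k : ℤ) : ℚ)
          / (((Y + U) ^ k * Y ^ (k + 1) : ℤ) : ℚ) := by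
    push_cast
    field_simp
    ring
  rw [key, sq, ← padicNorm.mul, ← Int.cast_mul, ← sq]
  refine padicNorm_intCast_div_le
    (hp.not_dvd_mul (mt hp.dvd_of_dvd_pow hYU) (mt hp.dvd_of_dvd_pow hY)) ?_
  -- numerator `= -Y ((Y + U) ^ k - k Y ^ (k - 1) U - Y ^ k) + k U ((Y + U) ^ k - Y ^ k)`
  rcases k with _ | k
  · simp
  have h₁ := sq_dvd_add_pow_sub_sub U Y (k + 1)
  have h₂ : U ^ 2 ∣ ((k + 1 : ℕ) : ℤ) * U * ((Y + U) ^ (k + 1) - Y ^ (k + 1)) := by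
    rw [sq]
    exact mul_dvd_mul (dvd_mul_left U _) (by simpa using sub_dvd_pow_sub_pow (Y + U) Y (k + 1))
  rw [Nat.add_sub_cancel] at h₁
  refine (dvd_add (h₁.mul_left (-Y)) h₂).trans (dvd_of_eq ?_)
  ring

theorem padicNorm_sum_inv_pow_le {x m : ℕ} (hx : ¬p ∣ x) (hm : p ∣ m) (K : ℕ) :
    padicNorm p (∑ j ∈ range m, 1 / ((x : ℚ) + j * p) ^ K) ≤ (p : ℚ)⁻¹ := by
  have hp := Nat.prime_iff_prime_int.mp (Fact.out : p.Prime)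
  have hx' : ¬(p : ℤ) ∣ x := mt Int.natCast_dvd_natCast.mp hx
  have hsplit : ∑ j ∈ range m, 1 / ((x : ℚ) + j * p) ^ K
      = ∑ j ∈ range m, (1 / ((x : ℚ) + j * p) ^ K - 1 / (x : ℚ) ^ K)
        + (m : ℚ) / ((x ^ K : ℤ) : ℚ) := by
    rw [sum_sub_distrib, sum_const, card_range, nsmul_eq_mul]
    push_cast
    ring
  rw [hsplit]
  refine padicNorm.nonarchimedean.trans
    (max_le (padicNorm.sum_le' (fun j _ => ?_) (by positivity)) ?_)
  · calc padicNorm p (1 / ((x : ℚ) + j * p) ^ K - 1 / (x : ℚ) ^ K)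
        ≤ padicNorm p ((j * p : ℤ) : ℚ) := by
          simpa using padicNorm_inv_pow_add_sub_le (U := j * p) hx' (dvd_mul_left _ _) K
      _ ≤ padicNorm p ((p : ℤ) : ℚ) := padicNorm_intCast_le_of_dvd (dvd_mul_left _ _)
      _ = (p : ℚ)⁻¹ := by rw [Int.cast_natCast, padicNorm.padicNorm_p_of_prime]
  · rw [padicNorm_div_intCast_of_not_dvd _ (mt hp.dvd_of_dvd_pow hx')]
    exact padicNorm_natCast_le_inv_of_dvd hm

end padicNorm

section S

variable {p x : ℕ}

theorem S_mul_sub_add_eq (hx : 0 < x) (hxp : x < p) (k m : ℕ) :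
    S p k x (p * (m * p)) - p * S p k x (p * m)
        + k * (m * p) * (∑ t ∈ range p, (t : ℚ)) * S p (k + 1) x (p * m)
      = ∑ t ∈ range p, ∑ j ∈ range m,
          (1 / ((x : ℚ) + j * p + t * (m * p)) ^ k - 1 / ((x : ℚ) + j * p) ^ k
            + k * (t * (m * p)) / ((x : ℚ) + j * p) ^ (k + 1)) := by
  simp only [S_mul_eq_sum hx hxp, sum_range_mul_eq_sum_sum, sum_add_distrib, sum_sub_distrib,
    sum_const, card_range, nsmul_eq_mul, mul_sum, sum_mul]
  rw [sum_comm (s := range m)]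
  congr 1
  · congr 1
    refine sum_congr rfl fun t _ => sum_congr rfl fun j _ => ?_
    push_cast
    ring
  · refine sum_congr rfl fun t _ => sum_congr rfl fun j _ => ?_
    ring

variable [Fact p.Prime]

theorem padicNorm_S_mul_sub_add_le (hx : 0 < x) (hxp : x < p) (k m : ℕ) :
    padicNorm p (S p k x (p * (m * p)) - p * S p k x (p * m)
        + k * (m * p) * (∑ t ∈ range p, (t : ℚ)) * S p (k + 1) x (p * m))
      ≤ padicNorm p (m * p) ^ 2 := by
  rw [S_mul_sub_add_eq hx hxp]
  refine padicNorm.sum_le' (fun t _ => padicNorm.sum_le' (fun j _ => ?_) (by positivity))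
    (by positivity)
  have hY : ¬(p : ℤ) ∣ x + j * p := by
    rw [dvd_add_left (dvd_mul_left _ _), Int.natCast_dvd_natCast]
    exact Nat.not_dvd_of_pos_of_lt hx hxp
  calc _ ≤ padicNorm p ((t * (m * p) : ℤ) : ℚ) ^ 2 := by
        simpa using padicNorm_inv_pow_add_sub_taylor_le (U := t * (m * p)) hY
          (dvd_mul_of_dvd_right (dvd_mul_left _ _) _) k
    _ ≤ padicNorm p (m * p) ^ 2 := by
        gcongr
        · exact padicNorm.nonneg _
        exact_mod_cast padicNorm_intCast_le_of_dvd (p := p) (dvd_mul_left ((m * p : ℕ) : ℤ) t)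

theorem padicNorm_S_le_one (hx : ¬p ∣ x) (k N : ℕ) : padicNorm p (S p k x N) ≤ 1 := by
  refine padicNorm.sum_le' (fun i hi => ?_) zero_le_one
  have hi : ¬(p : ℤ) ∣ i := by
    rw [Int.natCast_dvd_natCast, Nat.dvd_iff_mod_eq_zero, (mem_filter.mp hi).2,
      ← Nat.dvd_iff_mod_eq_zero]
    exact hx
  rw [← Int.cast_natCast i, ← Int.cast_pow, padicNorm_div_intCast_of_not_dvd _
    (mt (Nat.prime_iff_prime_int.mp Fact.out).dvd_of_dvd_pow hi), padicNorm.one]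

theorem padicNorm_S_pow_le (hx : 0 < x) (hxp : x < p) {r : ℕ} (hr : 2 ≤ r) (k : ℕ) :
    padicNorm p (S p k x (p ^ r)) ≤ (p : ℚ)⁻¹ := by
  obtain ⟨n, rfl⟩ : ∃ n, r = n + 1 := ⟨r - 1, by omega⟩
  rw [pow_succ', S_mul_eq_sum hx hxp]
  exact padicNorm_sum_inv_pow_le (Nat.not_dvd_of_pos_of_lt hx hxp) (dvd_pow_self p (by omega)) k

theorem padicNorm_S_pow_succ_sub_le (hx : 0 < x) (hxp : x < p) (hp2 : p ≠ 2) (k : ℕ) {r : ℕ}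
    (hr : 1 ≤ r) :
    padicNorm p (S p k x (p ^ (r + 1)) - p * S p k x (p ^ r))
      ≤ max ((p : ℚ)⁻¹ ^ (2 * r)) ((p : ℚ)⁻¹ ^ (r + 1) * padicNorm p (S p (k + 1) x (p ^ r))) := by
  obtain ⟨n, rfl⟩ : ∃ n, r = n + 1 := ⟨r - 1, by omega⟩
  rw [show p ^ (n + 1 + 1) = p * (p ^ n * p) by ring, pow_succ' p n]
  have hnorm : padicNorm p ((p : ℚ) ^ n * p) = (p : ℚ)⁻¹ ^ (n + 1) := by
    rw [← pow_succ, IsAbsoluteValue.abv_pow (padicNorm p), padicNorm.padicNorm_p_of_prime]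
  have hD := padicNorm_S_mul_sub_add_le hx hxp k (p ^ n)
  push_cast at hD
  rw [hnorm, ← pow_mul, mul_comm (n + 1)] at hD
  set C : ℚ := k * ((p : ℚ) ^ n * p) * (∑ t ∈ range p, (t : ℚ)) * S p (k + 1) x (p * p ^ n)
  have hsum : padicNorm p (∑ t ∈ range p, (t : ℚ)) ≤ (p : ℚ)⁻¹ := by
    have := padicNorm_natCast_le_inv_of_dvd (prime_dvd_sum_range_id (Fact.out : p.Prime) hp2)
    push_cast at this
    exact this
  have hC : padicNorm p C ≤ (p : ℚ)⁻¹ ^ (n + 1 + 1) * padicNorm p (S p (k + 1) x (p * p ^ n)) := by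
    simp only [C, padicNorm.mul, hnorm, pow_succ _ (n + 1)]
    calc _ ≤ 1 * (p : ℚ)⁻¹ ^ (n + 1) * (p : ℚ)⁻¹ * padicNorm p (S p (k + 1) x (p * p ^ n)) := by
          gcongr
          exacts [padicNorm.nonneg _, padicNorm.nonneg _, padicNorm.of_nat k]
      _ = _ := by ring
  calc _ = padicNorm p ((S p k x (p * (p ^ n * p)) - p * S p k x (p * p ^ n) + C) - C) := by
        rw [add_sub_cancel_right]
    _ ≤ _ := padicNorm.sub
    _ ≤ _ := max_le_max hD hC

end S

theorem stmt7_general (p x k : ℕ) (hp : p.Prime) (hp3 : 3 ≤ p) (hx : 0 < x) (hxp : x < p) :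
    ((p : ℤ)^2 ∣ (S p k x (p^2) - p * S p k x p).num) ∧
    (∀ r : ℕ, 2 ≤ r → (p : ℤ)^(r+2) ∣ (S p k x (p^(r+1)) - p * S p k x (p^r)).num) := by
  have := Fact.mk hp
  have hp2 : p ≠ 2 := by omega
  have hε : (p : ℚ)⁻¹ ≤ 1 := inv_le_one_of_one_le₀ (by exact_mod_cast hp.one_le)
  refine ⟨pow_dvd_num_of_padicNorm_le ?_, fun r hr => pow_dvd_num_of_padicNorm_le ?_⟩
  · calc _ ≤ max ((p : ℚ)⁻¹ ^ 2) ((p : ℚ)⁻¹ ^ 2 * padicNorm p (S p (k + 1) x p)) := by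
          simpa using padicNorm_S_pow_succ_sub_le hx hxp hp2 k le_rfl
      _ ≤ (p : ℚ)⁻¹ ^ 2 := max_le le_rfl <| mul_le_of_le_one_right (by positivity) <|
          padicNorm_S_le_one (Nat.not_dvd_of_pos_of_lt hx hxp) _ _
  · calc _ ≤ _ := padicNorm_S_pow_succ_sub_le hx hxp hp2 k (by omega : 1 ≤ r)
      _ ≤ (p : ℚ)⁻¹ ^ (r + 2) := by
        refine max_le (pow_le_pow_of_le_one (by positivity) hε (by omega)) ?_
        rw [pow_succ _ (r + 1)]
        gcongr
        exact padicNorm_S_pow_le hx hxp hr _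

theorem stmt7 (p x k : ℕ) (hp : p.Prime) (hp3 : 3 ≤ p) (hx : 0 < x) (hxp : x < p)
    (hk : 1 ≤ k) :
    ((p : ℤ)^2 ∣ (S p k x (p^2) - p * S p k x p).num) ∧
    (∀ r : ℕ, 2 ≤ r → (p : ℤ)^(r+2) ∣ (S p k x (p^(r+1)) - p * S p k x (p^r)).num) :=
  stmt7_general p x k hp hp3 hx hxp
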